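/- Let Delta_f = -nabla_f^2, X_f = diag(f), W_f the f-smoothing operator, g^(t) = exp(-i t Delta_f) g^(0) with ||g^(0)|| = 1. Then the time derivative of the location variance satisfies d/dt V_{X_f}(g^(t)) = <i[Delta_f, X_f^2] g^(t), g^(t)> - 4 E_{X_f}(g^(t)) Re(<i nabla_f g^(t), W_f g^(t)>), where E_{X_f}(g) = <X_f g, g> and V_{X_f}(g) = E_{X_f^2}(g) - E_{X_f}(g)^2. -/

import Mathlib

open Complex Matrix BigOperators
noncomputable section

/-- Standard Hermitian inner product on `ℂ^N`. -/
def ip {N : ℕ} (f g : Fin N → ℂ) : ℂ := ∑ v, f v * (starRingEnd ℂ) (g v)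

/-- The (complexified) `f`-partial derivative matrix. -/
def nablaF {N : ℕ} (A : Matrix (Fin N) (Fin N) ℝ) (f : Fin N → ℝ) :
    Matrix (Fin N) (Fin N) ℂ :=
  Matrix.of fun n m => (A n m : ℂ) * ((f n : ℂ) - (f m : ℂ))

/-- The location observable `X_f = diag f` on `ℂ^N`. -/
def Xf {N : ℕ} (f : Fin N → ℝ) : Matrix (Fin N) (Fin N) ℂ :=
  Matrix.diagonal fun v => (f v : ℂ)

/-- The `f`-smoothing operator `W_f = X_f ∇_f - ∇_f X_f`. -/
def Wf {N : ℕ} (A : Matrix (Fin N) (Fin N) ℝ) (f : Fin N → ℝ) :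
    Matrix (Fin N) (Fin N) ℂ :=
  Xf f * nablaF A f - nablaF A f * Xf f

/-- The Schrödinger evolution `g^(t) = exp(-i t Δ) g^(0)`. -/
def evol {N : ℕ} (Δ : Matrix (Fin N) (Fin N) ℂ) (g0 : Fin N → ℂ) (t : ℝ) :
    Fin N → ℂ :=
  (NormedSpace.exp ((-(Complex.I * (t : ℂ))) • Δ)).mulVec g0

attribute [local instance] Matrix.linftyOpNormedAddCommGroup Matrix.linftyOpNormedRing
  Matrix.linftyOpNormedAlgebra

lemma ip_smul_left {N : ℕ} (c : ℂ) (x y : Fin N → ℂ) : ip (c • x) y = c * ip x y := by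
  simp [ip, Finset.mul_sum, mul_assoc]

lemma ip_smul_right {N : ℕ} (c : ℂ) (x y : Fin N → ℂ) :
    ip x (c • y) = (starRingEnd ℂ) c * ip x y := by
  simp only [ip, Pi.smul_apply, smul_eq_mul, _root_.map_mul, Finset.mul_sum]
  congr 1; ext v; ring

lemma ip_add_left {N : ℕ} (x y z : Fin N → ℂ) : ip (x + y) z = ip x z + ip y z := by
  simp [ip, add_mul, Finset.sum_add_distrib]

lemma ip_sub_left {N : ℕ} (x y z : Fin N → ℂ) : ip (x - y) z = ip x z - ip y z := by
  simp [ip, sub_mul, Finset.sum_sub_distrib]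

lemma ip_neg_right {N : ℕ} (x y : Fin N → ℂ) : ip x (-y) = -ip x y := by
  simp [ip]

lemma conj_ip {N : ℕ} (x y : Fin N → ℂ) : (starRingEnd ℂ) (ip x y) = ip y x := by
  simp only [ip, map_sum, _root_.map_mul, starRingEnd_self_apply, star_star]
  congr 1; ext v; ring

lemma ip_conjT {N : ℕ} (M : Matrix (Fin N) (Fin N) ℂ) (x y : Fin N → ℂ) :
    ip (M.mulVec x) y = ip x (Mᴴ.mulVec y) := by
  simp only [ip, mulVec, dotProduct, conjTranspose_apply, map_sum, _root_.map_mul,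
    Finset.sum_mul, Finset.mul_sum, starRingEnd_self_apply, star_star]
  rw [Finset.sum_comm]
  simp only [starRingEnd_apply, star_star]
  congr 1; ext w; congr 1; ext v; ring

lemma ip_mulVec_right {N : ℕ} (M : Matrix (Fin N) (Fin N) ℂ) (x y : Fin N → ℂ) :
    ip x (M.mulVec y) = ip (Mᴴ.mulVec x) y := by
  rw [ip_conjT, conjTranspose_conjTranspose]

lemma evol_hasDerivAt {N : ℕ} (Δ : Matrix (Fin N) (Fin N) ℂ) (g0 : Fin N → ℂ)
    (t : ℝ) (v : Fin N) :
    HasDerivAt (fun s => evol Δ g0 s v)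
      ((((-Complex.I) • Δ).mulVec (evol Δ g0 t)) v) t := by
  set B : Matrix (Fin N) (Fin N) ℂ := (-Complex.I) • Δ with hB
  have harg : ∀ s : ℝ, (-(Complex.I * (s : ℂ))) • Δ = s • B := by
    intro s
    rw [hB, ← smul_assoc]
    congr 1
    rw [Complex.real_smul]
    ring
  have hexp : ∀ s : ℝ, evol Δ g0 s = (NormedSpace.exp (s • B)).mulVec g0 := by
    intro s
    rw [evol, harg]
  have h1 : HasDerivAt (fun s : ℝ => NormedSpace.exp (s • B))
      (NormedSpace.exp (t • B) * B) t := hasDerivAt_exp_smul_const B t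
  have h2 : HasDerivAt (fun s : ℝ => ((NormedSpace.exp (s • B)).mulVec g0) v)
      (((NormedSpace.exp (t • B) * B).mulVec g0) v) t := by
    simp only [mulVec, dotProduct]
    apply HasDerivAt.fun_sum
    intro w _
    have hL := (LinearMap.toContinuousLinearMap
        (Matrix.entryLinearMap ℝ ℂ v w)).hasFDerivAt.comp_hasDerivAt t h1
    exact hL.mul_const (g0 w)
  have hcomm : NormedSpace.exp (t • B) * B = B * NormedSpace.exp (t • B) :=
    (((Commute.refl B).smul_right t).exp_right).symm
  have heq : (((NormedSpace.exp (t • B) * B).mulVec g0) v)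
      = ((B.mulVec (evol Δ g0 t)) v) := by
    rw [hcomm, ← Matrix.mulVec_mulVec, hexp]
  rw [heq] at h2
  exact h2.congr_of_eventuallyEq (by filter_upwards with s; rw [hexp])

lemma ip_hasDerivAt {N : ℕ} (Δ M : Matrix (Fin N) (Fin N) ℂ) (hΔ : Δᴴ = Δ)
    (g0 : Fin N → ℂ) (t : ℝ) :
    HasDerivAt (fun s : ℝ => ip (M.mulVec (evol Δ g0 s)) (evol Δ g0 s))
      (ip ((Complex.I • (Δ * M - M * Δ)).mulVec (evol Δ g0 t)) (evol Δ g0 t)) t := by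
  set g : Fin N → ℂ := evol Δ g0 t with hg
  set g' : Fin N → ℂ := ((-Complex.I) • Δ).mulVec g with hg'
  have hD : HasDerivAt (fun s : ℝ => ip (M.mulVec (evol Δ g0 s)) (evol Δ g0 s))
      (ip (M.mulVec g') g + ip (M.mulVec g) g') t := by
    have key : ∀ v : Fin N, HasDerivAt
        (fun s : ℝ => (M.mulVec (evol Δ g0 s)) v
            * (starRingEnd ℂ) (evol Δ g0 s v))
        ((M.mulVec g') v * (starRingEnd ℂ) (g v)
          + (M.mulVec g) v * (starRingEnd ℂ) (g' v)) t := by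
      intro v
      have h1 : HasDerivAt (fun s : ℝ => (M.mulVec (evol Δ g0 s)) v)
          ((M.mulVec g') v) t := by
        simp only [mulVec, dotProduct]
        exact HasDerivAt.fun_sum fun w _ =>
          (evol_hasDerivAt Δ g0 t w).const_mul (M v w)
      have h2 : HasDerivAt (fun s : ℝ => (starRingEnd ℂ) (evol Δ g0 s v))
          ((starRingEnd ℂ) (g' v)) t := (evol_hasDerivAt Δ g0 t v).star
      exact h1.mul h2
    have := HasDerivAt.fun_sum (fun v (_ : v ∈ Finset.univ) => key v)
    simpa [ip, Finset.sum_add_distrib] using this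
  have hval : ip (M.mulVec g') g + ip (M.mulVec g) g'
      = ip ((Complex.I • (Δ * M - M * Δ)).mulVec g) g := by
    have e1 : ip (M.mulVec g') g = -Complex.I * ip ((M * Δ).mulVec g) g := by
      rw [hg', smul_mulVec, Matrix.mulVec_smul, ip_smul_left,
        Matrix.mulVec_mulVec]
    have e2 : ip (M.mulVec g) g' = Complex.I * ip ((Δ * M).mulVec g) g := by
      rw [hg', smul_mulVec, ip_smul_right, ip_mulVec_right, hΔ,
        Matrix.mulVec_mulVec]
      simp
    rw [e1, e2, smul_mulVec, ip_smul_left, Matrix.sub_mulVec, ip_sub_left]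
    ring
  rw [← hval]
  exact hD

lemma nabla_skew {N : ℕ} (A : Matrix (Fin N) (Fin N) ℝ) (hA : A.IsSymm)
    (f : Fin N → ℝ) : (nablaF A f)ᴴ = -(nablaF A f) := by
  ext n m
  have : A m n = A n m := by
    conv_lhs => rw [← hA]
    rfl
  simp [nablaF, conjTranspose_apply, this]
  ring

lemma Xf_herm {N : ℕ} (f : Fin N → ℝ) : (Xf f)ᴴ = Xf f := by
  simp [Xf, Matrix.diagonal_conjTranspose]

/-- Time derivative of the location variance under Schrödinger dynamics:
`d/dt V_{X_f}(g^(t)) = ⟨i[Δ_f, X_f²] g^(t), g^(t)⟩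
  - 4 E_{X_f}(g^(t)) Re ⟨i ∇_f g^(t), W_f g^(t)⟩`,
where `V_{X_f}(g) = E_{X_f²}(g) - E_{X_f}(g)²` and `Δ_f = -∇_f²`. -/
theorem deriv_variance (N : ℕ) (A : Matrix (Fin N) (Fin N) ℝ)
    (hA : A.IsSymm) (f : Fin N → ℝ) (g0 : Fin N → ℂ) (hg0 : ip g0 g0 = 1)
    (t : ℝ) :
    HasDerivAt
      (fun s : ℝ =>
        ip ((Xf f * Xf f).mulVec (evol (-(nablaF A f * nablaF A f)) g0 s))
            (evol (-(nablaF A f * nablaF A f)) g0 s)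
          - (ip ((Xf f).mulVec (evol (-(nablaF A f * nablaF A f)) g0 s))
              (evol (-(nablaF A f * nablaF A f)) g0 s)) ^ 2)
      (ip ((Complex.I • ((-(nablaF A f * nablaF A f)) * (Xf f * Xf f)
              - (Xf f * Xf f) * (-(nablaF A f * nablaF A f)))).mulVec
            (evol (-(nablaF A f * nablaF A f)) g0 t))
          (evol (-(nablaF A f * nablaF A f)) g0 t)
        - 4 * ip ((Xf f).mulVec (evol (-(nablaF A f * nablaF A f)) g0 t))
            (evol (-(nablaF A f * nablaF A f)) g0 t)
          * (((ip ((Complex.I • nablaF A f).mulVec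
                (evol (-(nablaF A f * nablaF A f)) g0 t))
              ((Wf A f).mulVec (evol (-(nablaF A f * nablaF A f)) g0 t))).re : ℝ) : ℂ))
      t := by
  set nb := nablaF A f with hnb
  set Δ : Matrix (Fin N) (Fin N) ℂ := -(nb * nb) with hΔdef
  set X := Xf f with hX
  have hnbH : nbᴴ = -nb := nabla_skew A hA f
  have hXH : Xᴴ = X := Xf_herm f
  have hΔH : Δᴴ = Δ := by
    rw [hΔdef, conjTranspose_neg, conjTranspose_mul, hnbH]
    simp
  set g : Fin N → ℂ := evol Δ g0 t with hg
  have hW : (Wf A f)ᴴ = Wf A f := by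
    rw [Wf, conjTranspose_sub, conjTranspose_mul, conjTranspose_mul, ← hnb,
      hnbH, ← hX, hXH]
    noncomm_ring
  -- first term
  have h1 := ip_hasDerivAt Δ (X * X) hΔH g0 t
  -- second term
  have h2 := ip_hasDerivAt Δ X hΔH g0 t
  set E : ℝ → ℂ := fun s => ip (X.mulVec (evol Δ g0 s)) (evol Δ g0 s) with hE
  set e' : ℂ := ip ((Complex.I • (Δ * X - X * Δ)).mulVec g) g with he'
  have hsq : HasDerivAt (fun s => E s ^ 2) (2 * E t * e') t := by
    have hmm := h2.fun_mul h2
    have h' : (fun s => E s * E s) = fun s => E s ^ 2 := by funext s; ring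
    rw [h'] at hmm
    have hv : e' * E t + E t * e' = 2 * E t * e' := by ring
    rw [← hv]
    exact hmm
  have hmain := h1.sub hsq
  -- identify e'
  set c : ℂ := ip ((Complex.I • nb).mulVec g) ((Wf A f).mulVec g) with hc
  have hcomm : Δ * X - X * Δ = nb * Wf A f + Wf A f * nb := by
    rw [hΔdef, Wf, ← hnb, ← hX]
    noncomm_ring
  have he'val : e' = c + (starRingEnd ℂ) c := by
    rw [he', hcomm]
    have expand : ip ((Complex.I • (nb * Wf A f + Wf A f * nb)).mulVec g) g
        = Complex.I * (ip ((nb * Wf A f).mulVec g) g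
            + ip ((Wf A f * nb).mulVec g) g) := by
      rw [smul_mulVec, ip_smul_left, Matrix.add_mulVec, ip_add_left]
    have p1 : ip ((nb * Wf A f).mulVec g) g = -ip ((Wf A f).mulVec g) (nb.mulVec g) := by
      rw [← Matrix.mulVec_mulVec, ip_conjT, hnbH, Matrix.neg_mulVec, ip_neg_right]
    have p2 : ip ((Wf A f * nb).mulVec g) g = ip (nb.mulVec g) ((Wf A f).mulVec g) := by
      rw [← Matrix.mulVec_mulVec, ip_conjT, hW]
    rw [expand, p1, p2, hc, smul_mulVec, ip_smul_left]
    have : (starRingEnd ℂ) (Complex.I * ip (nb.mulVec g) ((Wf A f).mulVec g))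
        = -Complex.I * (starRingEnd ℂ) (ip (nb.mulVec g) ((Wf A f).mulVec g)) := by
      simp [_root_.map_mul]
    rw [this, conj_ip]
    ring
  have hre : e' = ((2 * c.re : ℝ) : ℂ) := by
    rw [he'val, Complex.add_conj]
  -- final deriv value
  have hfinal : ip ((Complex.I • (Δ * (X * X) - X * X * Δ)).mulVec g) g
      - 2 * E t * e'
      = ip ((Complex.I • (Δ * (X * X) - X * X * Δ)).mulVec g) g
        - 4 * E t * ((c.re : ℝ) : ℂ) := by
    rw [hre]
    push_cast
    ring
  rw [hfinal] at hmain
  exact hmain
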